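/- arXiv:1204.4546 — 3 statements merged into one kernel-verified Lean document; each statement's English description precedes it below -/
import Mathlib

section
/- If w ∈ ℂ, α ≥ 0, γ ∈ ℝ and for all real θ one has Re(w(1 + α e^{iθ}) - α e^{iθ}) > γ, then Re(w) > α|w - 1| + γ. -/
open Complex

theorem Complex.mul_exp_pi_sub_arg_mul_I (z : ℂ) :
    z * exp ((Real.pi - z.arg : ℝ) * I) = -(‖z‖ : ℂ) := by
  calc z * exp ((Real.pi - z.arg : ℝ) * I)
      = ‖z‖ * exp (z.arg * I) * exp ((Real.pi - z.arg : ℝ) * I) := by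
        rw [norm_mul_exp_arg_mul_I]
    _ = ‖z‖ * exp ((z.arg + (Real.pi - z.arg) : ℝ) * I) := by
        push_cast
        rw [mul_assoc, ← exp_add, ← add_mul]
    _ = -(‖z‖ : ℂ) := by rw [add_sub_cancel, exp_pi_mul_I, mul_neg_one]

theorem re_gt_abs_of_forall_theta_general (w : ℂ) (α γ : ℝ)
    (h : ∀ θ : ℝ, (w * (1 + (α : ℂ) * Complex.exp (θ * Complex.I))
        - (α : ℂ) * Complex.exp (θ * Complex.I)).re > γ) :
    w.re > α * ‖w - 1‖ + γ := by
  -- Rotate `w - 1` onto the negative real axis.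
  set e := exp ((Real.pi - (w - 1).arg : ℝ) * I)
  have he : (w - 1) * e = -(‖w - 1‖ : ℂ) := mul_exp_pi_sub_arg_mul_I (w - 1)
  have hval : w * (1 + α * e) - α * e = w - (α * ‖w - 1‖ : ℝ) := by
    push_cast
    linear_combination (α : ℂ) * he
  have key := h (Real.pi - (w - 1).arg)
  rw [hval, sub_re, ofReal_re] at key
  linarith

theorem re_gt_abs_of_forall_theta (w : ℂ) (α γ : ℝ) (hα : 0 ≤ α)
    (h : ∀ θ : ℝ, (w * (1 + (α : ℂ) * Complex.exp (θ * Complex.I))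
        - (α : ℂ) * Complex.exp (θ * Complex.I)).re > γ) :
    w.re > α * ‖w - 1‖ + γ :=
  re_gt_abs_of_forall_theta_general w α γ h
end

section
/- Let f(z) = z - ∑_{n=2}^∞ a_n z^n be analytic on the unit disc with a_n ≥ 0, f_m(z) = z - ∑_{n=2}^m a_n z^n its m-th partial sum, and let δ_n satisfy δ_n ≥ 1 for 2 ≤ n ≤ m and δ_n ≥ δ_{m+1} > 1 for n ≥ m+1. If ∑_{n=2}^∞ δ_n a_n ≤ 1, then for all z in the unit disc, Re(f(z)/f_m(z)) ≥ 1 - 1/δ_{m+1}. -/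
/-!
Write `f = f_m - T` with `T(z) = ∑_{n > m} a_n z^n` and `r = |z|`. Since `δ_n ≥ 1` for `n ≤ m` and
`δ_n ≥ δ_{m+1}` for `n > m`,
`∑_{n=2}^m a_n r^n + δ_{m+1} |T(z)| ≤ ∑_{n ≥ 2} δ_n a_n r^n ≤ r ∑ δ_n a_n ≤ r`,
so `δ_{m+1} |f(z) - f_m(z)| ≤ r - ∑_{n=2}^m a_n r^n ≤ |f_m(z)|`. Hence `f/f_m` lies in the disc of
radius `1/δ_{m+1}` about `1`, whose real part is at least `1 - 1/δ_{m+1}`.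
-/

open Finset

theorem one_sub_one_div_le_re_div {u v : ℂ} {W : ℝ} (hv : v ≠ 0) (hW : 0 < W)
    (h : W * ‖u - v‖ ≤ ‖v‖) : 1 - 1 / W ≤ (u / v).re := by
  have hdist : ‖(u - v) / v‖ ≤ 1 / W := by
    rw [norm_div, div_le_div_iff₀ (norm_pos_iff.2 hv) hW]
    linarith
  have hre : (u / v).re = 1 + ((u - v) / v).re := by
    rw [sub_div, div_self hv, Complex.sub_re, Complex.one_re]
    ring
  have := (abs_le.1 (Complex.abs_re_le_norm ((u - v) / v))).1
  linarith

theorem mul_norm_tsum_sub_sum_range_le {E : Type*} [NormedAddCommGroup E] [CompleteSpace E]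
    {s : ℕ → E} {w : ℕ → ℝ} {k : ℕ} {W : ℝ} (x : E) (hW : 0 ≤ W) (hw : ∀ n, 1 ≤ w n)
    (hwW : ∀ n, k ≤ n → W ≤ w n) (hs : Summable fun n => w n * ‖s n‖)
    (hx : ∑' n, w n * ‖s n‖ ≤ ‖x‖) :
    W * ‖∑' n, s n - ∑ n ∈ range k, s n‖ ≤ ‖x - ∑ n ∈ range k, s n‖ := by
  have hnorm : Summable fun n => ‖s n‖ :=
    hs.of_nonneg_of_le (fun n => norm_nonneg _)
      (fun n => le_mul_of_one_le_left (norm_nonneg _) (hw n))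
  have htail_norm : Summable fun n => ‖s (n + k)‖ := (summable_nat_add_iff k).2 hnorm
  have htail : ∑' n, s n - ∑ n ∈ range k, s n = ∑' n, s (n + k) := by
    rw [← hnorm.of_norm.sum_add_tsum_nat_add k, add_sub_cancel_left]
  have hsplit := hs.sum_add_tsum_nat_add k
  have hhead : ∑ n ∈ range k, ‖s n‖ ≤ ∑ n ∈ range k, w n * ‖s n‖ :=
    sum_le_sum fun n _ => le_mul_of_one_le_left (norm_nonneg _) (hw n)
  have htail_le : W * ∑' n, ‖s (n + k)‖ ≤ ∑' n, w (n + k) * ‖s (n + k)‖ := by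
    rw [← tsum_mul_left]
    exact (htail_norm.mul_left W).tsum_le_tsum
      (fun n => mul_le_mul_of_nonneg_right (hwW _ (by omega)) (norm_nonneg _))
      ((summable_nat_add_iff k).2 hs)
  have hx_sub : ‖x‖ - ∑ n ∈ range k, ‖s n‖ ≤ ‖x - ∑ n ∈ range k, s n‖ :=
    (sub_le_sub_left (norm_sum_le _ _) _).trans (norm_sub_norm_le _ _)
  calc W * ‖∑' n, s n - ∑ n ∈ range k, s n‖
      ≤ W * ∑' n, ‖s (n + k)‖ := by
        rw [htail]
        exact mul_le_mul_of_nonneg_left (norm_tsum_le_tsum_norm htail_norm) hW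
    _ ≤ ‖x‖ - ∑ n ∈ range k, ‖s n‖ := by linarith
    _ ≤ ‖x - ∑ n ∈ range k, s n‖ := hx_sub

theorem summable_and_tsum_mul_norm_ofReal_mul_pow_le {a w : ℕ → ℝ} (ha : ∀ n, 0 ≤ a n)
    (hw : ∀ n, 0 ≤ w n) (hs : Summable fun n => w n * a n) (hle : ∑' n, w n * a n ≤ 1)
    {z : ℂ} (hz : ‖z‖ ≤ 1) :
    (Summable fun n => w n * ‖(a n : ℂ) * z ^ (n + 2)‖) ∧
      ∑' n, w n * ‖(a n : ℂ) * z ^ (n + 2)‖ ≤ ‖z‖ := by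
  have hterm (n : ℕ) : w n * ‖(a n : ℂ) * z ^ (n + 2)‖ ≤ w n * a n * ‖z‖ := by
    rw [norm_mul, norm_pow, Complex.norm_of_nonneg (ha n), ← mul_assoc]
    exact mul_le_mul_of_nonneg_left (pow_le_of_le_one (norm_nonneg z) hz (by omega))
      (mul_nonneg (hw n) (ha n))
  have hsum : Summable fun n => w n * ‖(a n : ℂ) * z ^ (n + 2)‖ :=
    (hs.mul_right ‖z‖).of_nonneg_of_le (fun n => by positivity [hw n]) hterm
  refine ⟨hsum, ?_⟩
  calc ∑' n, w n * ‖(a n : ℂ) * z ^ (n + 2)‖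
      ≤ ∑' n, w n * a n * ‖z‖ := hsum.tsum_le_tsum hterm (hs.mul_right _)
    _ = (∑' n, w n * a n) * ‖z‖ := tsum_mul_right
    _ ≤ ‖z‖ := mul_le_of_le_one_left (norm_nonneg z) hle

theorem sum_Icc_two_eq_sum_range {M : Type*} [AddCommMonoid M] (g : ℕ → M) (m : ℕ) :
    ∑ n ∈ Icc 2 m, g n = ∑ n ∈ range (m + 1 - 2), g (n + 2) := by
  rw [← Ico_add_one_right_eq_Icc, sum_Ico_eq_sum_range]
  simp only [add_comm]

theorem re_f_div_fm_general (m : ℕ) (a δ : ℕ → ℝ)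
    (ha : ∀ n, 2 ≤ n → 0 ≤ a n)
    (hδ1 : ∀ n, 2 ≤ n → n ≤ m → 1 ≤ δ n)
    (hδ2 : ∀ n, m + 1 ≤ n → δ (m + 1) ≤ δ n)
    (hδm : 1 < δ (m + 1))
    (hsum : Summable (fun n : ℕ => δ (n + 2) * a (n + 2)))
    (hle : (∑' n : ℕ, δ (n + 2) * a (n + 2)) ≤ 1)
    (f fm : ℂ → ℂ)
    (hf : ∀ z : ℂ, f z = z - ∑' n : ℕ, (a (n + 2) : ℂ) * z ^ (n + 2))
    (hfm : ∀ z : ℂ, fm z = z - ∑ n ∈ Finset.Icc 2 m, (a n : ℂ) * z ^ n) :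
    ∀ z : ℂ, ‖z‖ < 1 → fm z ≠ 0 →
      1 - 1 / δ (m + 1) ≤ (f z / fm z).re := by
  intro z hz hfm0
  have hδ (n : ℕ) : 1 ≤ δ (n + 2) := by
    rcases le_or_gt (n + 2) m with h | h
    · exact hδ1 _ (by omega) h
    · exact hδm.le.trans (hδ2 _ (by omega))
  obtain ⟨hs, hx⟩ := summable_and_tsum_mul_norm_ofReal_mul_pow_le (fun n => ha (n + 2) (by omega))
    (fun n => zero_le_one.trans (hδ n)) hsum hle hz.le
  have hkey := mul_norm_tsum_sub_sum_range_le (k := m + 1 - 2) z (zero_le_one.trans hδm.le) hδ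
    (fun n hn => hδ2 _ (by omega)) hs hx
  have hfm_eq : fm z = z - ∑ n ∈ range (m + 1 - 2), (a (n + 2) : ℂ) * z ^ (n + 2) := by
    rw [hfm, sum_Icc_two_eq_sum_range]
  have hdiff : f z - fm z = -(∑' n, (a (n + 2) : ℂ) * z ^ (n + 2) -
      ∑ n ∈ range (m + 1 - 2), (a (n + 2) : ℂ) * z ^ (n + 2)) := by
    rw [hf, hfm_eq]
    ring
  refine one_sub_one_div_le_re_div hfm0 (zero_lt_one.trans hδm) ?_
  rwa [hdiff, norm_neg, hfm_eq]

theorem re_f_div_fm (m : ℕ) (hm : 1 ≤ m) (a δ : ℕ → ℝ)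
    (ha : ∀ n, 2 ≤ n → 0 ≤ a n)
    (hδ1 : ∀ n, 2 ≤ n → n ≤ m → 1 ≤ δ n)
    (hδ2 : ∀ n, m + 1 ≤ n → δ (m + 1) ≤ δ n)
    (hδm : 1 < δ (m + 1))
    (hsum : Summable (fun n : ℕ => δ (n + 2) * a (n + 2)))
    (hle : (∑' n : ℕ, δ (n + 2) * a (n + 2)) ≤ 1)
    (f fm : ℂ → ℂ)
    (hf : ∀ z : ℂ, f z = z - ∑' n : ℕ, (a (n + 2) : ℂ) * z ^ (n + 2))
    (hfm : ∀ z : ℂ, fm z = z - ∑ n ∈ Finset.Icc 2 m, (a n : ℂ) * z ^ n) :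
    ∀ z : ℂ, ‖z‖ < 1 → fm z ≠ 0 →
      1 - 1 / δ (m + 1) ≤ (f z / fm z).re :=
  re_f_div_fm_general m a δ ha hδ1 hδ2 hδm hsum hle f fm hf hfm
end

section
/- Let (a_n)_{n≥2} be nonnegative reals, m ≥ 1, and suppose ∑_{n=2}^m a_n + δ ∑_{n=m+1}^∞ a_n ≤ 1 with δ > 1. Define w(z) = (δ ∑_{n=m+1}^∞ a_n z^{n-1}) / (2 - 2∑_{n=2}^m a_n z^{n-1} - δ ∑_{n=m+1}^∞ a_n z^{n-1}) for |z| < 1. Then |w(z)| ≤ 1 for all z in the open unit disc, and consequently Re((1+w(z))/(1-w(z))) ≥ 0 wherever w(z) ≠ 1. -/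
theorem w_bound (m : ℕ) (hm : 1 ≤ m) (δ : ℝ) (hδ : 1 < δ) (a : ℕ → ℝ)
    (ha : ∀ n, 2 ≤ n → 0 ≤ a n)
    (hsum : Summable (fun n : ℕ => a (n + m + 1)))
    (hle : (∑ n ∈ Finset.Icc 2 m, a n) + δ * (∑' n : ℕ, a (n + m + 1)) ≤ 1) :
    ∀ z : ℂ, ‖z‖ < 1 →
      letI w : ℂ :=
        ((δ : ℂ) * ∑' n : ℕ, (a (n + m + 1) : ℂ) * z ^ (n + m)) /
          (2 - 2 * (∑ n ∈ Finset.Icc 2 m, (a n : ℂ) * z ^ (n - 1))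
            - (δ : ℂ) * ∑' n : ℕ, (a (n + m + 1) : ℂ) * z ^ (n + m))
      ‖w‖ ≤ 1 ∧ (w ≠ 1 → 0 ≤ ((1 + w) / (1 - w)).re) := by
  intro z hz
  set S : ℂ := ∑ n ∈ Finset.Icc 2 m, (a n : ℂ) * z ^ (n - 1) with hSdef
  set N : ℂ := (δ : ℂ) * ∑' n : ℕ, (a (n + m + 1) : ℂ) * z ^ (n + m) with hNdef
  have hzpow : ∀ k : ℕ, ‖z‖ ^ k ≤ 1 :=
    fun k => pow_le_one₀ (norm_nonneg z) hz.le
  have ha' : ∀ n : ℕ, 0 ≤ a (n + m + 1) := fun n => ha _ (by omega)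
  -- bound on S
  have hA : ‖S‖ ≤ ∑ n ∈ Finset.Icc 2 m, a n := by
    refine le_trans (norm_sum_le _ _) ?_
    refine Finset.sum_le_sum fun n hn => ?_
    have h2 : 2 ≤ n := (Finset.mem_Icc.mp hn).1
    rw [norm_mul, norm_pow, Complex.norm_real, Real.norm_eq_abs, abs_of_nonneg (ha n h2)]
    exact mul_le_of_le_one_right (ha n h2) (hzpow _)
  -- bound on N
  have hterm : ∀ n : ℕ, ‖(a (n + m + 1) : ℂ) * z ^ (n + m)‖ ≤ a (n + m + 1) := by
    intro n
    rw [norm_mul, norm_pow, Complex.norm_real, Real.norm_eq_abs, abs_of_nonneg (ha' n)]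
    exact mul_le_of_le_one_right (ha' n) (hzpow _)
  have hsumnorm : Summable (fun n : ℕ => ‖(a (n + m + 1) : ℂ) * z ^ (n + m)‖) :=
    Summable.of_nonneg_of_le (fun n => norm_nonneg _) hterm hsum
  have hterm' : ∀ n : ℕ, ‖(a (n + m + 1) : ℂ) * z ^ (n + m)‖ ≤ a (n + m + 1) := by
    intro n; exact hterm n
  have hsumnorm' : Summable (fun n : ℕ => ‖(a (n + m + 1) : ℂ) * z ^ (n + m)‖) :=
    Summable.of_nonneg_of_le (fun n => norm_nonneg _) hterm' hsum
  have hNb : ‖N‖ ≤ δ * ∑' n : ℕ, a (n + m + 1) := by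
    rw [hNdef, norm_mul, Complex.norm_real, Real.norm_eq_abs, abs_of_nonneg (by linarith : (0:ℝ) ≤ δ)]
    refine mul_le_mul_of_nonneg_left ?_ (by linarith)
    calc ‖∑' n : ℕ, (a (n + m + 1) : ℂ) * z ^ (n + m)‖
        ≤ ∑' n : ℕ, ‖(a (n + m + 1) : ℂ) * z ^ (n + m)‖ :=
          norm_tsum_le_tsum_norm hsumnorm'
      _ ≤ ∑' n : ℕ, a (n + m + 1) := Summable.tsum_le_tsum hterm' hsumnorm' hsum
  have hkey : ‖N‖ + ‖S‖ ≤ 1 := by linarith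
  -- |N| ≤ |D|
  have hD : ‖N‖ ≤ ‖2 - 2 * S - N‖ := by
    have h1 : ‖2 * S + N‖ ≤ 2 * ‖S‖ + ‖N‖ := by
      calc ‖2 * S + N‖ ≤ ‖2 * S‖ + ‖N‖ :=
            norm_add_le _ _
        _ = 2 * ‖S‖ + ‖N‖ := by
            rw [norm_mul]; norm_num
    have h2 : ‖(2 : ℂ)‖ - ‖2 * S + N‖ ≤ ‖2 - (2 * S + N)‖ := by
      exact norm_sub_norm_le (2 : ℂ) (2 * S + N)
    have h3 : (2 - 2 * S - N) = 2 - (2 * S + N) := by ring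
    rw [h3]
    have : ‖(2 : ℂ)‖ = 2 := by norm_num
    linarith [h2, h1]
  have habsw : ‖N / (2 - 2 * S - N)‖ ≤ 1 := by
    rw [norm_div]
    rcases eq_or_lt_of_le (norm_nonneg (2 - 2 * S - N)) with h | h
    · rw [← h, div_zero]; norm_num
    · exact (div_le_one h).mpr hD
  refine ⟨habsw, fun hne => ?_⟩
  set w : ℂ := N / (2 - 2 * S - N) with hw
  have hns : Complex.normSq w ≤ 1 := by
    rw [← Complex.sq_norm]
    nlinarith [norm_nonneg w]
  have hden : (1 - w) ≠ 0 := sub_ne_zero.mpr (fun h => hne h.symm)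
  have hnsd : 0 ≤ Complex.normSq (1 - w) := Complex.normSq_nonneg _
  rw [Complex.div_re, ← add_div]
  apply div_nonneg _ hnsd
  simp only [Complex.add_re, Complex.sub_re, Complex.one_re, Complex.add_im,
    Complex.sub_im, Complex.one_im]
  have := Complex.normSq_apply w
  nlinarith [hns]
end
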